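/- arXiv:1102.0304 — 5 statements merged into one kernel-verified Lean document; each statement's English description precedes it below -/
import Mathlib

section
/- Let ι : α → α be a measurable involution (ι ∘ ι = id) of a measurable space α, and let ν and ν' be σ-finite measures on α such that the pushforward measure ι_*ν is mutually absolutely continuous with ν and ι_*ν' is mutually absolutely continuous with ν'. Suppose ν' = ν₀ + ν₁ where ν₀ is mutually singular with ν and ν₁ is absolutely continuous with respect to ν (the Lebesgue decomposition of ν' with respect to ν). Then ι_*ν₀ is mutually absolutely continuous with ν₀, and ι_*ν₁ is mutually absolutely continuous with ν₁. -/
/-!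
Write `ν' = ν₀ + ν₁` and `ι_*ν' = ι_*ν₀ + ι_*ν₁`. Since `ι_*ν ≪ ν`, the second sum is again a
decomposition into a part singular to `ν` and a part absolutely continuous with respect to `ν`.
For two such decompositions, absolute continuity of the sums passes to the parts, because each
singular part is singular to the other absolutely continuous part. Applying this to
`ν' ≪ ι_*ν'` and `ι_*ν' ≪ ν'` gives both equivalences.
-/

open MeasureTheory Function

namespace MeasureTheory.Measure

variable {α : Type*} [MeasurableSpace α]

theorem AbsolutelyContinuous.of_add_of_mutuallySingular_of_absolutelyContinuous
    {a b a' b' ν : Measure α} (h : a + b ≪ a' + b')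
    (ha : a ⟂ₘ ν) (ha' : a' ⟂ₘ ν) (hb : b ≪ ν) (hb' : b' ≪ ν) : a ≪ a' ∧ b ≪ b' := by
  obtain ⟨hab, hbb⟩ := AbsolutelyContinuous.add_left_iff.mp h
  refine ⟨absolutelyContinuous_of_add_of_mutuallySingular hab (ha.mono_ac .rfl hb'), ?_⟩
  rw [add_comm] at hbb
  exact absolutelyContinuous_of_add_of_mutuallySingular hbb (ha'.mono_ac .rfl hb).symm

theorem map_map_of_involutive {ι : α → α} (hι : Measurable ι) (hinv : Involutive ι)
    (μ : Measure α) : (μ.map ι).map ι = μ := by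
  rw [map_map hι hι, hinv.comp_self, map_id]

theorem MutuallySingular.map_of_involutive {ι : α → α} (hι : Measurable ι)
    (hinv : Involutive ι) {μ ν : Measure α} (h : μ ⟂ₘ ν) (hν : ν.map ι ≪ ν) :
    μ.map ι ⟂ₘ ν := by
  have hemb : MeasurableEmbedding ι :=
    (MeasurableEquiv.ofInvolutive ι hinv hι).measurableEmbedding
  simpa only [map_map_of_involutive hι hinv] using hemb.mutuallySingular_map (h.mono_ac .rfl hν)

end MeasureTheory.Measure

theorem lebesgue_decomposition_quasi_invariant_general
    {α : Type*} [MeasurableSpace α] (ι : α → α) (hι : Measurable ι) (hinv : ι ∘ ι = id)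
    (ν ν' ν₀ ν₁ : Measure α)
    (hν : ν.map ι ≪ ν ∧ ν ≪ ν.map ι) (hν' : ν'.map ι ≪ ν' ∧ ν' ≪ ν'.map ι)
    (hsum : ν' = ν₀ + ν₁) (h₀ : ν₀.MutuallySingular ν) (h₁ : ν₁ ≪ ν) :
    (ν₀.map ι ≪ ν₀ ∧ ν₀ ≪ ν₀.map ι) ∧ (ν₁.map ι ≪ ν₁ ∧ ν₁ ≪ ν₁.map ι) := by
  have hmap : ν'.map ι = ν₀.map ι + ν₁.map ι := by rw [hsum, Measure.map_add _ _ hι]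
  have h₀' : ν₀.map ι ⟂ₘ ν := h₀.map_of_involutive hι (congrFun hinv) hν.1
  have h₁' : ν₁.map ι ≪ ν := (h₁.map hι).trans hν.1
  rw [hmap, hsum] at hν'
  obtain ⟨hmap₀, hmap₁⟩ :=
    hν'.1.of_add_of_mutuallySingular_of_absolutelyContinuous h₀' h₀ h₁' h₁
  obtain ⟨hac₀, hac₁⟩ :=
    hν'.2.of_add_of_mutuallySingular_of_absolutelyContinuous h₀ h₀' h₁ h₁'
  exact ⟨⟨hmap₀, hac₀⟩, hmap₁, hac₁⟩

/-- **Lebesgue decomposition with respect to a quasi-invariant measure.**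
If `ι` is a measurable involution of `α`, `ν` and `ν'` are σ-finite measures each equivalent to
its pushforward under `ι`, and `ν' = ν₀ + ν₁` is the Lebesgue decomposition of `ν'` with respect
to `ν` (so `ν₀ ⟂ ν` and `ν₁ ≪ ν`), then `ν₀` and `ν₁` are each equivalent to their pushforwards
under `ι`. -/
theorem lebesgue_decomposition_quasi_invariant
    {α : Type*} [MeasurableSpace α] (ι : α → α) (hι : Measurable ι) (hinv : ι ∘ ι = id)
    (ν ν' ν₀ ν₁ : Measure α) [SigmaFinite ν] [SigmaFinite ν']
    (hν : ν.map ι ≪ ν ∧ ν ≪ ν.map ι) (hν' : ν'.map ι ≪ ν' ∧ ν' ≪ ν'.map ι)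
    (hsum : ν' = ν₀ + ν₁) (h₀ : ν₀.MutuallySingular ν) (h₁ : ν₁ ≪ ν) :
    (ν₀.map ι ≪ ν₀ ∧ ν₀ ≪ ν₀.map ι) ∧ (ν₁.map ι ≪ ν₁ ∧ ν₁ ≪ ν₁.map ι) :=
  lebesgue_decomposition_quasi_invariant_general ι hι hinv ν ν' ν₀ ν₁ hν hν' hsum h₀ h₁
end

section
/- Let X be a second countable, locally compact Hausdorff space with its Borel σ-algebra, and let μ and σ be finite Borel measures on X which are mutually singular. Let S : L²(X, μ) → L²(X, σ) be a bounded linear map satisfying S(f·g) = f·S(g) for every continuous compactly supported function f : X → ℂ and every g ∈ L²(X, μ) (where f·g and f·S(g) denote pointwise multiplication). Then S = 0. -/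
open MeasureTheory

open scoped ENNReal

/-!
Since `μ ⟂ₘ σ`, regularity gives a compact `K` carrying almost all of `μ` inside an open `U` of
tiny `σ`-measure, and Urysohn's lemma a cutoff `f ∈ C_c(X)` with `1_K ≤ f ≤ 1_U`. Then `f • g` is
close to `g` in `L²(μ)` while `S (f • g) = f • S g` is small in `L²(σ)`, so `‖S g‖` is arbitrarily
small.
-/

section

variable {α 𝕜 E : Type*} [MeasurableSpace α] {μ : Measure α} {p : ℝ≥0∞}
  [NormedField 𝕜] [NormedAddCommGroup E] [NormedSpace 𝕜 E]

theorem eLpNorm_smul_le_eLpNorm_indicator {f : α → 𝕜} {g : α → E} {t : Set α}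
    (hf : ∀ x, ‖f x‖ ≤ 1) (hft : ∀ x ∉ t, f x = 0) :
    eLpNorm (fun x => f x • g x) p μ ≤ eLpNorm (t.indicator g) p μ := by
  refine eLpNorm_mono fun x => ?_
  by_cases hx : x ∈ t
  · rw [Set.indicator_of_mem hx, norm_smul]
    exact mul_le_of_le_one_left (norm_nonneg _) (hf x)
  · simp [hft x hx]

end

namespace MeasureTheory.Measure.MutuallySingular

variable {X : Type*} [TopologicalSpace X] [T2Space X] [MeasurableSpace X] {μ σ : Measure X}

theorem exists_isCompact_subset_isOpen [OpensMeasurableSpace X] [IsFiniteMeasure μ]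
    [μ.InnerRegularCompactLTTop] [σ.OuterRegular] (hsing : μ ⟂ₘ σ) {δ₁ δ₂ : ℝ≥0∞}
    (hδ₁ : δ₁ ≠ 0) (hδ₂ : δ₂ ≠ 0) :
    ∃ K U, IsCompact K ∧ IsOpen U ∧ K ⊆ U ∧ μ Kᶜ < δ₁ ∧ σ U < δ₂ := by
  obtain ⟨s, hs, hμs, hσs⟩ := hsing
  obtain ⟨K, hKs, hK, hμK⟩ := hs.compl.exists_isCompact_sdiff_lt (measure_ne_top μ _) hδ₁
  have hσK : σ K < δ₂ := by
    rw [measure_mono_null hKs hσs]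
    exact pos_iff_ne_zero.2 hδ₂
  obtain ⟨U, hKU, hU, hσU⟩ := K.exists_isOpen_lt_of_lt δ₂ hσK
  refine ⟨K, U, hK, hU, hKU, ?_, hσU⟩
  rwa [← measure_sdiff_null hμs, Set.sdiff_eq, Set.inter_comm, ← Set.sdiff_eq]

variable [LocallyCompactSpace X] [BorelSpace X] [IsFiniteMeasure μ]
  [μ.InnerRegularCompactLTTop] [σ.OuterRegular]
  {𝕜 E : Type*} [RCLike 𝕜] [NormedAddCommGroup E] [NormedSpace 𝕜 E] {p : ℝ≥0∞}

theorem exists_cutoff (hsing : μ ⟂ₘ σ) (hp : 1 ≤ p) (hp' : p ≠ ∞) {g h : X → E}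
    (hg : MemLp g p μ) (hh : MemLp h p σ) {ε : ℝ} (hε : 0 < ε) :
    ∃ f : X → 𝕜, Continuous f ∧ HasCompactSupport f ∧
      eLpNorm (fun x => g x - f x • g x) p μ ≤ ENNReal.ofReal ε ∧
      eLpNorm (fun x => f x • h x) p σ ≤ ENNReal.ofReal ε := by
  obtain ⟨δ₁, hδ₁, hgδ⟩ := hg.eLpNorm_indicator_le hp hp' hε
  obtain ⟨δ₂, hδ₂, hhδ⟩ := hh.eLpNorm_indicator_le hp hp' hε
  obtain ⟨K, U, hK, hU, hKU, hμK, hσU⟩ := hsing.exists_isCompact_subset_isOpen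
    (ENNReal.ofReal_pos.2 hδ₁).ne' (ENNReal.ofReal_pos.2 hδ₂).ne'
  obtain ⟨u, hu1, hu0, hu, hu01⟩ := exists_continuous_one_zero_of_isCompact hK hU.isClosed_compl
    (Set.disjoint_compl_right_iff_subset.2 hKU)
  refine ⟨fun x => (u x : 𝕜), RCLike.continuous_ofReal.comp u.continuous,
    hu.comp_left RCLike.ofReal_zero, ?_, ?_⟩
  · have hcomp : ∀ x, ‖1 - (u x : 𝕜)‖ ≤ 1 := fun x => by
      rw [← RCLike.ofReal_one, ← RCLike.ofReal_sub, RCLike.norm_ofReal,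
        abs_of_nonneg (sub_nonneg.2 (hu01 x).2)]
      linarith [(hu01 x).1]
    have hcompK : ∀ x ∉ Kᶜ, 1 - (u x : 𝕜) = 0 := fun x hx => by
      simp [hu1 (not_not.1 hx)]
    have hsub : (fun x => g x - (u x : 𝕜) • g x) = fun x => (1 - (u x : 𝕜)) • g x := by
      ext x; rw [sub_smul, one_smul]
    rw [hsub]
    exact (eLpNorm_smul_le_eLpNorm_indicator hcomp hcompK).trans
      (hgδ _ hK.measurableSet.compl hμK.le)
  · have hnorm : ∀ x, ‖(u x : 𝕜)‖ ≤ 1 := fun x => by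
      rw [RCLike.norm_ofReal, abs_of_nonneg (hu01 x).1]
      exact (hu01 x).2
    have hvanish : ∀ x ∉ U, (u x : 𝕜) = 0 := fun x hx => by
      simp [hu0 (Set.mem_compl hx)]
    exact (eLpNorm_smul_le_eLpNorm_indicator hnorm hvanish).trans
      (hhδ _ hU.measurableSet hσU.le)

end MeasureTheory.Measure.MutuallySingular

/-- Let `X` be a second countable, locally compact Hausdorff space with its Borel σ-algebra, and
let `μ`, `σ` be finite Borel measures on `X` which are mutually singular.  If
`S : L²(X, μ) → L²(X, σ)` is a bounded linear map which is a module map over the continuous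
compactly supported functions (i.e. `S (f • g) = f • S g` for all such `f`), then `S = 0`. -/
theorem module_map_eq_zero_of_mutuallySingular
    {X : Type*} [TopologicalSpace X] [SecondCountableTopology X] [LocallyCompactSpace X]
    [T2Space X] [MeasurableSpace X] [BorelSpace X]
    (μ σ : Measure X) [IsFiniteMeasure μ] [IsFiniteMeasure σ]
    (hsing : μ.MutuallySingular σ)
    (S : Lp ℂ 2 μ →L[ℂ] Lp ℂ 2 σ)
    (hmod : ∀ f : X → ℂ, Continuous f → HasCompactSupport f →
      ∀ (g g' : Lp ℂ 2 μ) (h' : Lp ℂ 2 σ),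
        ((g' : X → ℂ) =ᵐ[μ] fun x => f x * (g : X → ℂ) x) →
        ((h' : X → ℂ) =ᵐ[σ] fun x => f x * (S g : X → ℂ) x) →
        S g' = h') :
    S = 0 := by
  refine ContinuousLinearMap.ext fun g =>
    norm_le_zero_iff.1 <| le_of_forall_pos_le_add fun ε hε => ?_
  set ε' := ε / (‖S‖ + 1)
  have hε' : 0 < ε' := by positivity
  obtain ⟨f, hf, hfc, hgf, hSgf⟩ := hsing.exists_cutoff (𝕜 := ℂ) one_le_two ENNReal.ofNat_ne_top
    (Lp.memLp g) (Lp.memLp (S g)) hε'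
  have hfg : MemLp (fun x => f x * g x) 2 μ :=
    (Lp.memLp g).mul' (hf.memLp_top_of_hasCompactSupport hfc μ)
  have hfSg : MemLp (fun x => f x * S g x) 2 σ :=
    (Lp.memLp (S g)).mul' (hf.memLp_top_of_hasCompactSupport hfc σ)
  have hS : S (hfg.toLp _) = hfSg.toLp _ := hmod f hf hfc g _ _ hfg.coeFn_toLp hfSg.coeFn_toLp
  have hdist : ‖g - hfg.toLp _‖ ≤ ε' := by
    have hcoe : ⇑(g - hfg.toLp _) =ᵐ[μ] fun x => g x - f x • g x := by
      filter_upwards [Lp.coeFn_sub g (hfg.toLp _), hfg.coeFn_toLp] with x hsub hmul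
      rw [hsub, Pi.sub_apply, hmul, smul_eq_mul]
    rw [Lp.norm_def, eLpNorm_congr_ae hcoe]
    exact ENNReal.toReal_le_of_le_ofReal hε'.le hgf
  have hsmall : ‖hfSg.toLp _‖ ≤ ε' := by
    rw [Lp.norm_toLp]
    exact ENNReal.toReal_le_of_le_ofReal hε'.le hSgf
  calc ‖S g‖ = ‖S (g - hfg.toLp _) + hfSg.toLp _‖ := by rw [map_sub, hS, sub_add_cancel]
    _ ≤ ‖S‖ * ‖g - hfg.toLp _‖ + ‖hfSg.toLp _‖ := norm_add_le_of_le (S.le_opNorm _) le_rfl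
    _ ≤ ‖S‖ * ε' + ε' := by gcongr
    _ = 0 + ε := by rw [zero_add, ← add_one_mul]; exact mul_div_cancel₀ ε (by positivity)
end

section
/- Let X be a second countable, locally compact Hausdorff space with its Borel σ-algebra, μ a finite Borel measure on X, and E a separable complex Hilbert space. Let T : L²(X, μ) → L²(X, μ; E) be a bounded linear map satisfying T(f·g) = f·T(g) for every continuous compactly supported function f : X → ℂ and every g ∈ L²(X, μ). Then there exists a Borel measurable function β : X → E which is μ-essentially bounded, such that T(g) = g·β μ-almost everywhere for every g ∈ L²(X, μ), and ‖T‖ equals the μ-essential supremum of x ↦ ‖β(x)‖. -/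
/-!
Put `β := T 1`. The module property gives `T f = f • β` for continuous compactly supported `f`;
the set of `g` with `T g = g • β` a.e. is closed in `L²` (pass to a.e.-convergent subsequences),
and compactly supported continuous functions are dense, so `T` is multiplication by `β`.
Testing `T` on indicators `1_s` gives `∫_s ‖β‖² ≤ ‖T‖² μ s` for all `s`, hence `‖β‖ ≤ ‖T‖` a.e.,
while Hölder's inequality gives `‖T‖ ≤ ‖β‖_∞`.
-/

open MeasureTheory Filter Topology
open scoped ENNReal

namespace MeasureTheory

variable {α : Type*} [MeasurableSpace α] {μ : Measure α}
  {𝕜 E : Type*} [NontriviallyNormedField 𝕜] [NormedAddCommGroup E] [NormedSpace 𝕜 E]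

theorem eLpNorm_top_le_of_forall_eLpNorm_indicator_le [SigmaFinite μ] {p : ℝ≥0∞} (hp0 : p ≠ 0)
    (hp : p ≠ ∞) {f : α → E} (hf : AEStronglyMeasurable f μ) {C : ℝ≥0∞}
    (hC : ∀ s, MeasurableSet s → μ s < ∞ →
      eLpNorm (s.indicator f) p μ ≤ C * μ s ^ (1 / p.toReal)) :
    eLpNorm f ∞ μ ≤ C := by
  have hp_pos : 0 < p.toReal := ENNReal.toReal_pos hp0 hp
  have hpow : ∀ᵐ x ∂μ, ‖f x‖ₑ ^ p.toReal ≤ C ^ p.toReal := by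
    refine ae_le_of_forall_setLIntegral_le_of_sigmaFinite₀ (hf.enorm.pow_const _)
      fun s hs hμs => ?_
    calc ∫⁻ x in s, ‖f x‖ₑ ^ p.toReal ∂μ = eLpNorm (s.indicator f) p μ ^ p.toReal := by
          rw [eLpNorm_indicator_eq_eLpNorm_restrict hs, eLpNorm_eq_eLpNorm' hp0 hp,
            ← lintegral_rpow_enorm_eq_rpow_eLpNorm' hp_pos]
      _ ≤ (C * μ s ^ (1 / p.toReal)) ^ p.toReal := by gcongr; exact hC s hs hμs
      _ = ∫⁻ _ in s, C ^ p.toReal ∂μ := by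
          rw [setLIntegral_const, ENNReal.mul_rpow_of_nonneg _ _ hp_pos.le, ← ENNReal.rpow_mul,
            one_div_mul_cancel hp_pos.ne', ENNReal.rpow_one]
  rw [eLpNorm_exponent_top]
  exact eLpNormEssSup_le_of_ae_enorm_bound
    (hpow.mono fun x hx => (ENNReal.rpow_le_rpow_iff hp_pos).1 hx)

variable {p : ℝ≥0∞} [Fact (1 ≤ p)]

theorem isClosed_setOf_coeFn_ae_eq_smul {q : ℝ≥0∞} [Fact (1 ≤ q)]
    {F : Lp 𝕜 p μ → Lp E q μ} (hF : Continuous F) (β : α → E) :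
    IsClosed {g : Lp 𝕜 p μ | (F g : α → E) =ᵐ[μ] fun x => (g : α → 𝕜) x • β x} := by
  refine IsSeqClosed.isClosed fun u g hu hug => ?_
  obtain ⟨ns, hns, hns_ae⟩ := (tendstoInMeasure_of_tendsto_Lp hug).exists_seq_tendsto_ae
  have hFu : Tendsto (fun n => F (u (ns n))) atTop (𝓝 (F g)) :=
    (hF.tendsto g).comp (hug.comp hns.tendsto_atTop)
  obtain ⟨ms, hms, hms_ae⟩ := (tendstoInMeasure_of_tendsto_Lp hFu).exists_seq_tendsto_ae
  filter_upwards [ae_all_iff.2 fun n => hu (ns (ms n)), hns_ae, hms_ae] with x hux hgx hFx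
  refine tendsto_nhds_unique hFx ?_
  simpa only [Function.comp_def, hux] using (hgx.comp hms.tendsto_atTop).smul_const (β x)

theorem Lp.dense_setOf_ae_eq_continuous_hasCompactSupport [TopologicalSpace α] [NormalSpace α]
    [R1Space α] [WeaklyLocallyCompactSpace α] [BorelSpace α] [μ.Regular] [NormedSpace ℝ E]
    (hp : p ≠ ∞) :
    Dense {g : Lp E p μ |
      ∃ f : α → E, Continuous f ∧ HasCompactSupport f ∧ (g : α → E) =ᵐ[μ] f} := by
  refine fun g => EMetric.mem_closure_iff.2 fun ε hε => ?_
  obtain ⟨δ, hδ, hδε⟩ := exists_between hε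
  obtain ⟨f, hfc, hgf, hf, hfp⟩ :=
    (Lp.memLp g).exists_hasCompactSupport_eLpNorm_sub_le hp hδ.ne'
  refine ⟨hfp.toLp f, ⟨f, hf, hfc, hfp.coeFn_toLp⟩, ?_⟩
  rw [Lp.edist_def, eLpNorm_congr_ae ((ae_eq_refl _).sub hfp.coeFn_toLp)]
  exact hgf.trans_lt hδε

section MultiplicationOperator

variable {T : Lp 𝕜 p μ →L[𝕜] Lp E p μ} {β : α → E}

theorem ContinuousLinearMap.opENorm_le_eLpNorm_top_of_ae_eq_smul
    (hT : ∀ g, (T g : α → E) =ᵐ[μ] fun x => (g : α → 𝕜) x • β x) : ‖T‖ₑ ≤ eLpNorm β ∞ μ :=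
  T.opENorm_le_bound fun g => by
    rw [Lp.enorm_def, Lp.enorm_def, eLpNorm_congr_ae (hT g), mul_comm]
    exact eLpNorm_smul_le_eLpNorm_mul_eLpNorm_top p β (Lp.aestronglyMeasurable g)

theorem ContinuousLinearMap.eLpNorm_top_le_opENorm_of_ae_eq_smul [SigmaFinite μ] (hp : p ≠ ∞)
    (hβ : AEStronglyMeasurable β μ)
    (hT : ∀ g, (T g : α → E) =ᵐ[μ] fun x => (g : α → 𝕜) x • β x) : eLpNorm β ∞ μ ≤ ‖T‖ₑ := by
  have hp0 : p ≠ 0 := (zero_lt_one.trans_le Fact.out).ne'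
  refine eLpNorm_top_le_of_forall_eLpNorm_indicator_le hp0 hp hβ fun s hs hμs => ?_
  set g := indicatorConstLp p hs hμs.ne (1 : 𝕜)
  have hTg : s.indicator β =ᵐ[μ] T g := by
    filter_upwards [hT g, indicatorConstLp_coeFn (E := 𝕜)] with x hTx hgx
    rw [hTx, hgx]
    by_cases hxs : x ∈ s <;> simp [hxs]
  calc eLpNorm (s.indicator β) p μ = ‖T g‖ₑ := by rw [eLpNorm_congr_ae hTg, Lp.enorm_def]
    _ ≤ ‖T‖ₑ * ‖g‖ₑ := T.le_opENorm g
    _ ≤ ‖T‖ₑ * μ s ^ (1 / p.toReal) := by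
        gcongr
        simpa using enorm_indicatorConstLp_le (hs := hs) (hμs := hμs.ne) (c := (1 : 𝕜))

end MultiplicationOperator

end MeasureTheory

theorem module_map_is_multiplication_by_section_general
    {X : Type*} [TopologicalSpace X] [SecondCountableTopology X] [LocallyCompactSpace X]
    [T2Space X] [MeasurableSpace X] [BorelSpace X]
    (μ : Measure X) [IsFiniteMeasure μ]
    (E : Type*) [NormedAddCommGroup E] [InnerProductSpace ℂ E]
    (T : Lp ℂ 2 μ →L[ℂ] Lp E 2 μ)
    (hmod : ∀ f : X → ℂ, Continuous f → HasCompactSupport f →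
      ∀ (g g' : Lp ℂ 2 μ) (h' : Lp E 2 μ),
        ((g' : X → ℂ) =ᵐ[μ] fun x => f x * (g : X → ℂ) x) →
        ((h' : X → E) =ᵐ[μ] fun x => f x • (T g : X → E) x) →
        T g' = h') :
    ∃ β : X → E, StronglyMeasurable β ∧ eLpNorm β ⊤ μ ≠ ⊤ ∧
      (∀ g : Lp ℂ 2 μ, (T g : X → E) =ᵐ[μ] fun x => (g : X → ℂ) x • β x) ∧
      ‖T‖ = (eLpNorm β ⊤ μ).toReal := by
  set one : Lp ℂ 2 μ := Lp.const 2 μ 1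
  obtain ⟨β, hβm, hβ⟩ := Lp.aestronglyMeasurable (T one)
  have hT_compactSupport : ∀ g : Lp ℂ 2 μ,
      (∃ f : X → ℂ, Continuous f ∧ HasCompactSupport f ∧ (g : X → ℂ) =ᵐ[μ] f) →
      (T g : X → E) =ᵐ[μ] fun x => (g : X → ℂ) x • β x := by
    rintro g ⟨f, hf, hfc, hgf⟩
    have hfβ : MemLp (f • (T one : X → E)) 2 μ :=
      (Lp.memLp _).smul (hf.memLp_top_of_hasCompactSupport hfc μ)
    have hg : (g : X → ℂ) =ᵐ[μ] fun x => f x * (one : X → ℂ) x := by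
      filter_upwards [hgf, Lp.coeFn_const (p := 2) (μ := μ) (c := (1 : ℂ))] with x h1 h2
      rw [h1, h2, Function.const_apply, mul_one]
    rw [hmod f hf hfc _ g (hfβ.toLp _) hg hfβ.coeFn_toLp]
    filter_upwards [hfβ.coeFn_toLp, hβ, hgf] with x h1 h2 h3
    rw [h1, Pi.smul_apply', h2, h3]
  have hT : ∀ g : Lp ℂ 2 μ, (T g : X → E) =ᵐ[μ] fun x => (g : X → ℂ) x • β x := fun g =>
    (isClosed_setOf_coeFn_ae_eq_smul T.continuous β).closure_subset_iff.2 hT_compactSupport <|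
      (Lp.dense_setOf_ae_eq_continuous_hasCompactSupport (E := ℂ) (μ := μ) (p := 2)
        ENNReal.ofNat_ne_top).closure_eq ▸ Set.mem_univ g
  have hnorm : ‖T‖ₑ = eLpNorm β ⊤ μ :=
    le_antisymm (ContinuousLinearMap.opENorm_le_eLpNorm_top_of_ae_eq_smul hT)
      (ContinuousLinearMap.eLpNorm_top_le_opENorm_of_ae_eq_smul ENNReal.ofNat_ne_top
        hβm.aestronglyMeasurable hT)
  exact ⟨β, hβm, hnorm ▸ enorm_ne_top, hT, by rw [← hnorm, toReal_enorm]⟩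

/-- Let `X` be a second countable, locally compact Hausdorff space with its Borel σ-algebra, `μ`
a finite Borel measure on `X`, and `E` a separable complex Hilbert space.  If
`T : L²(X, μ) → L²(X, μ; E)` is a bounded linear map which is a module map over the continuous
compactly supported functions, then there is a Borel measurable, μ-essentially bounded
`β : X → E` such that `T g = g • β` μ-a.e. for every `g`, and `‖T‖` is the μ-essential supremum
of `x ↦ ‖β x‖`. -/
theorem module_map_is_multiplication_by_section
    {X : Type*} [TopologicalSpace X] [SecondCountableTopology X] [LocallyCompactSpace X]
    [T2Space X] [MeasurableSpace X] [BorelSpace X]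
    (μ : Measure X) [IsFiniteMeasure μ]
    (E : Type*) [NormedAddCommGroup E] [InnerProductSpace ℂ E] [CompleteSpace E]
    [TopologicalSpace.SeparableSpace E]
    (T : Lp ℂ 2 μ →L[ℂ] Lp E 2 μ)
    (hmod : ∀ f : X → ℂ, Continuous f → HasCompactSupport f →
      ∀ (g g' : Lp ℂ 2 μ) (h' : Lp E 2 μ),
        ((g' : X → ℂ) =ᵐ[μ] fun x => f x * (g : X → ℂ) x) →
        ((h' : X → E) =ᵐ[μ] fun x => f x • (T g : X → E) x) →
        T g' = h') :
    ∃ β : X → E, StronglyMeasurable β ∧ eLpNorm β ⊤ μ ≠ ⊤ ∧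
      (∀ g : Lp ℂ 2 μ, (T g : X → E) =ᵐ[μ] fun x => (g : X → ℂ) x • β x) ∧
      ‖T‖ = (eLpNorm β ⊤ μ).toReal :=
  module_map_is_multiplication_by_section_general μ E T hmod
end

section
/- Let X be a second countable, locally compact Hausdorff space with its Borel σ-algebra and μ a finite Borel measure on X. Let S : L²(X, μ) → L²(X, μ) be a bounded linear operator that commutes with the multiplication operator M_f for every continuous function f : X → ℂ vanishing at infinity (M_f g = f·g). Then there exists a μ-essentially bounded Borel function g₀ : X → ℂ such that S = M_{g₀}, and ‖S‖ equals the μ-essential supremum of |g₀|. -/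
/-!
Put `g₀ := S 1`. Commutation with `M_f` for compactly supported continuous `f` gives
`S f = f g₀`, hence `‖f g₀‖₂ ≤ ‖S‖ ‖f‖₂`. Testing this on Urysohn functions equal to `1` on a
compact `K` and supported in an open `U ⊇ K` gives `∫_K |g₀|² ≤ ‖S‖² μ(U)`; by inner and outer
regularity this becomes `|g₀|² μ ≤ ‖S‖² μ` as measures, i.e. `|g₀| ≤ ‖S‖` almost everywhere.
Now `S` and `M_{g₀}` are bounded operators agreeing on the dense subspace `C_c(X)`, so they are
equal, and `‖M_{g₀}‖ ≤ ‖g₀‖_∞` gives the reverse norm inequality.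
-/

open MeasureTheory Filter Set
open scoped ENNReal NNReal

namespace MeasureTheory

variable {α : Type*} [MeasurableSpace α]

theorem Measure.le_of_forall_isCompact_subset_isOpen [TopologicalSpace α] {μ ν : Measure α}
    [ν.InnerRegular] [μ.OuterRegular]
    (h : ∀ K U, IsCompact K → IsOpen U → K ⊆ U → ν K ≤ μ U) : ν ≤ μ := by
  refine Measure.le_iff.2 fun s hs => ?_
  rw [hs.measure_eq_iSup_isCompact ν, s.measure_eq_iInf_isOpen μ]
  exact iSup₂_le fun K hKs => iSup_le fun hK =>
    le_iInf₂ fun U hsU => le_iInf fun hU => h K U hK hU (hKs.trans hsU)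

theorem ae_le_of_withDensity_le_smul {μ : Measure α} [SigmaFinite μ] {F : α → ℝ≥0∞}
    (hF : AEMeasurable F μ) {c : ℝ≥0∞} (h : μ.withDensity F ≤ c • μ) : ∀ᵐ x ∂μ, F x ≤ c :=
  ae_le_of_forall_setLIntegral_le_of_sigmaFinite₀ hF fun s hs _ => by
    rw [← withDensity_apply _ hs, setLIntegral_const]
    exact h s

section mulOp

variable {𝕜 : Type*} [NontriviallyNormedField 𝕜] {μ : Measure α} (p : ℝ≥0∞) [Fact (1 ≤ p)]

noncomputable def Lp.mulOp (φ : Lp 𝕜 ∞ μ) : Lp 𝕜 p μ →L[𝕜] Lp 𝕜 p μ :=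
  ContinuousLinearMap.holderL μ ∞ p p (ContinuousLinearMap.mul 𝕜 𝕜) φ

variable {p}

theorem Lp.coeFn_mulOp (φ : Lp 𝕜 ∞ μ) (g : Lp 𝕜 p μ) :
    Lp.mulOp p φ g =ᵐ[μ] fun x => φ x * g x :=
  ContinuousLinearMap.coeFn_holder _ φ g

theorem Lp.norm_mulOp_le (φ : Lp 𝕜 ∞ μ) : ‖Lp.mulOp p φ‖ ≤ ‖φ‖ :=
  calc ‖Lp.mulOp p φ‖
      ≤ ‖ContinuousLinearMap.holderL μ ∞ p p (ContinuousLinearMap.mul 𝕜 𝕜)‖ * ‖φ‖ :=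
        ContinuousLinearMap.le_opNorm _ φ
    _ ≤ 1 * ‖φ‖ := by
        gcongr
        exact (ContinuousLinearMap.norm_holderL_le _).trans
          (ContinuousLinearMap.opNorm_mul_le _ _)
    _ = ‖φ‖ := one_mul _

end mulOp

variable [TopologicalSpace α] [BorelSpace α] {p : ℝ≥0∞} {μ : Measure α}

theorem Lp.dense_setOf_continuous_hasCompactSupport {E : Type*} [NormedAddCommGroup E]
    [NormedSpace ℝ E] [NormalSpace α] [R1Space α] [WeaklyLocallyCompactSpace α] [μ.Regular]
    [Fact (1 ≤ p)] (hp : p ≠ ∞) :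
    Dense {g : Lp E p μ | ∃ (f : α → E) (hf : MemLp f p μ),
      Continuous f ∧ HasCompactSupport f ∧ hf.toLp f = g} := by
  refine EMetric.dense_iff.2 fun g r hr => ?_
  obtain ⟨ε, hε, hεr⟩ := exists_between hr
  obtain ⟨f, hfcs, hgf, hfc, hf⟩ := (Lp.memLp g).exists_hasCompactSupport_eLpNorm_sub_le hp hε.ne'
  refine ⟨hf.toLp f, ?_, f, hf, hfc, hfcs, rfl⟩
  calc edist (hf.toLp f) g = eLpNorm (⇑g - f) p μ := by
        rw [edist_comm, ← Lp.toLp_coeFn g (Lp.memLp g), Lp.edist_toLp_toLp, Lp.toLp_coeFn]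
    _ < r := hgf.trans_lt hεr

section bound

variable {𝕜 : Type*} [RCLike 𝕜] [LocallyCompactSpace α] [T2Space α]

theorem withDensity_enorm_rpow_le_of_forall_hasCompactSupport {G : α → 𝕜} {c : ℝ≥0}
    (hp0 : p ≠ 0) (hp : p ≠ ∞)
    (hG : ∀ f : α → 𝕜, Continuous f → HasCompactSupport f →
      eLpNorm (fun x => f x * G x) p μ ≤ c * eLpNorm f p μ)
    {K U : Set α} (hK : IsCompact K) (hU : IsOpen U) (hKU : K ⊆ U) :
    μ.withDensity (fun x => ‖G x‖ₑ ^ p.toReal) K ≤ c ^ p.toReal * μ U := by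
  lift p to ℝ≥0 using hp
  have hp0' : p ≠ 0 := by exact_mod_cast hp0
  obtain ⟨u, hu1, hu0, hucs, hu01⟩ := exists_continuous_one_zero_of_isCompact hK
    hU.isClosed_compl (disjoint_compl_right_iff_subset.2 hKU)
  set f : α → 𝕜 := fun x => (u x : 𝕜)
  have hKf : eLpNorm (K.indicator G) p μ ≤ eLpNorm (fun x => f x * G x) p μ := by
    refine eLpNorm_mono_enorm fun x => ?_
    by_cases hx : x ∈ K
    · simp [f, hx, hu1 hx]
    · simp [hx]
  have hfU : eLpNorm f p μ ≤ eLpNorm (U.indicator fun _ => (1 : 𝕜)) p μ := by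
    refine eLpNorm_mono_enorm fun x => ?_
    by_cases hx : x ∈ U
    · rw [indicator_of_mem hx, enorm_one, ← ofReal_norm, RCLike.norm_ofReal,
        abs_of_nonneg (hu01 x).1]
      exact ENNReal.ofReal_le_one.2 (hu01 x).2
    · simp [f, hx, hu0 (show x ∈ Uᶜ from hx)]
  rw [withDensity_apply _ hK.measurableSet, ENNReal.coe_toReal,
    ← eLpNorm_nnreal_pow_eq_lintegral hp0',
    ← eLpNorm_indicator_eq_eLpNorm_restrict hK.measurableSet]
  calc eLpNorm (K.indicator G) p μ ^ (p : ℝ)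
      ≤ (c * eLpNorm (U.indicator fun _ => (1 : 𝕜)) p μ) ^ (p : ℝ) := by
        gcongr
        exact hKf.trans ((hG f (by fun_prop) (hucs.comp_left RCLike.ofReal_zero)).trans (by gcongr))
    _ = c ^ (p : ℝ) * μ U := by
        rw [ENNReal.mul_rpow_of_nonneg _ _ p.coe_nonneg, eLpNorm_nnreal_pow_eq_lintegral hp0']
        congr 1
        rw [← lintegral_indicator_one hU.measurableSet]
        refine lintegral_congr fun x => ?_
        by_cases hx : x ∈ U <;> simp [hx, pos_iff_ne_zero.2 hp0']

theorem eLpNorm_top_le_of_forall_hasCompactSupport [SecondCountableTopology α] [μ.OuterRegular]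
    [SigmaFinite μ] {G : α → 𝕜} {c : ℝ≥0} (hp0 : p ≠ 0) (hp : p ≠ ∞) (hGp : MemLp G p μ)
    (hG : ∀ f : α → 𝕜, Continuous f → HasCompactSupport f →
      eLpNorm (fun x => f x * G x) p μ ≤ c * eLpNorm f p μ) :
    eLpNorm G ∞ μ ≤ c := by
  have hp' : 0 < p.toReal := ENNReal.toReal_pos hp0 hp
  have : IsFiniteMeasure (μ.withDensity fun x => ‖G x‖ₑ ^ p.toReal) :=
    isFiniteMeasure_withDensity (lintegral_rpow_enorm_lt_top_of_eLpNorm_lt_top hp0 hp hGp.2).ne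
  have hν : μ.withDensity (fun x => ‖G x‖ₑ ^ p.toReal) ≤ (c ^ p.toReal : ℝ≥0) • μ :=
    Measure.le_of_forall_isCompact_subset_isOpen fun K U hK hU hKU => by
      simpa [ENNReal.coe_rpow_of_nonneg _ hp'.le] using
        withDensity_enorm_rpow_le_of_forall_hasCompactSupport hp0 hp hG hK hU hKU
  have hGc := ae_le_of_withDensity_le_smul (hGp.1.enorm.pow_const _) hν
  rw [eLpNorm_exponent_top]
  refine eLpNormEssSup_le_of_ae_enorm_bound ?_
  filter_upwards [hGc] with x hx
  rw [ENNReal.coe_rpow_of_nonneg _ hp'.le] at hx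
  exact (ENNReal.rpow_le_rpow_iff hp').1 hx

theorem eLpNorm_top_le_nnnorm_of_apply_hasCompactSupport [SecondCountableTopology α]
    [μ.OuterRegular] [SigmaFinite μ] [IsFiniteMeasureOnCompacts μ] [Fact (1 ≤ p)] (hp : p ≠ ∞)
    (T : Lp 𝕜 p μ →L[𝕜] Lp 𝕜 p μ) {G : α → 𝕜} (hGp : MemLp G p μ)
    (hT : ∀ (f : α → 𝕜) (hf : MemLp f p μ), Continuous f → HasCompactSupport f →
      T (hf.toLp f) =ᵐ[μ] fun x => f x * G x) :
    eLpNorm G ∞ μ ≤ ‖T‖₊ := by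
  refine eLpNorm_top_le_of_forall_hasCompactSupport (one_pos.trans_le Fact.out).ne' hp hGp
    fun f hfc hfcs => ?_
  have hf := hfc.memLp_of_hasCompactSupport (p := p) hfcs (μ := μ)
  calc eLpNorm (fun x => f x * G x) p μ = ‖T (hf.toLp f)‖ₑ := by
        rw [Lp.enorm_def, eLpNorm_congr_ae (hT f hf hfc hfcs)]
    _ ≤ ‖T‖ₑ * ‖hf.toLp f‖ₑ := T.le_opENorm _
    _ = ‖T‖₊ * eLpNorm f p μ := by rw [Lp.enorm_toLp]; rfl

theorem Lp.eq_mulOp_of_apply_hasCompactSupport [NormalSpace α] [μ.Regular] [Fact (1 ≤ p)]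
    (hp : p ≠ ∞) (T : Lp 𝕜 p μ →L[𝕜] Lp 𝕜 p μ) {G : α → 𝕜} (hG : MemLp G ∞ μ)
    (hT : ∀ (f : α → 𝕜) (hf : MemLp f p μ), Continuous f → HasCompactSupport f →
      T (hf.toLp f) =ᵐ[μ] fun x => f x * G x) :
    T = Lp.mulOp p (hG.toLp G) := by
  refine DFunLike.coe_injective <| Continuous.ext_on
    (Lp.dense_setOf_continuous_hasCompactSupport hp) T.continuous (Lp.mulOp p _).continuous ?_
  rintro _ ⟨f, hf, hfc, hfcs, rfl⟩
  refine Lp.ext ?_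
  filter_upwards [hT f hf hfc hfcs, Lp.coeFn_mulOp (hG.toLp G) (hf.toLp f), hG.coeFn_toLp,
    hf.coeFn_toLp] with x hTx hGfx hGx hfx
  rw [hTx, hGfx, hGx, hfx, mul_comm]

end bound

end MeasureTheory

/-- Let `X` be a second countable, locally compact Hausdorff space with its Borel σ-algebra and
`μ` a finite Borel measure on `X`.  If a bounded operator `S` on `L²(X, μ)` commutes with the
multiplication operator `M_f` for every continuous `f : X → ℂ` vanishing at infinity, then `S`
is multiplication by a μ-essentially bounded Borel function `g₀`, and `‖S‖` is the μ-essential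
supremum of `|g₀|`. -/
theorem commutant_of_multiplication_algebra
    {X : Type*} [TopologicalSpace X] [SecondCountableTopology X] [LocallyCompactSpace X]
    [T2Space X] [MeasurableSpace X] [BorelSpace X]
    (μ : Measure X) [IsFiniteMeasure μ]
    (S : Lp ℂ 2 μ →L[ℂ] Lp ℂ 2 μ)
    (hcomm : ∀ f : X → ℂ, Continuous f → Tendsto f (cocompact X) (nhds 0) →
      ∀ (g g' h' : Lp ℂ 2 μ),
        ((g' : X → ℂ) =ᵐ[μ] fun x => f x * (g : X → ℂ) x) →
        ((h' : X → ℂ) =ᵐ[μ] fun x => f x * (S g : X → ℂ) x) →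
        S g' = h') :
    ∃ g₀ : X → ℂ, Measurable g₀ ∧ eLpNorm g₀ ⊤ μ ≠ ⊤ ∧
      (∀ g : Lp ℂ 2 μ, (S g : X → ℂ) =ᵐ[μ] fun x => g₀ x * (g : X → ℂ) x) ∧
      ‖S‖ = (eLpNorm g₀ ⊤ μ).toReal := by
  set φ := S (Lp.const 2 μ (1 : ℂ))
  have hS : ∀ (f : X → ℂ) (hf : MemLp f 2 μ), Continuous f → HasCompactSupport f →
      S (hf.toLp f) =ᵐ[μ] fun x => f x * φ x := by
    intro f hf hfc hfcs
    have hfφ : MemLp (fun x => f x * φ x) 2 μ :=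
      (Lp.memLp φ).smul (hfc.memLp_top_of_hasCompactSupport hfcs μ)
    rw [hcomm f hfc hfcs.is_zero_at_infty (Lp.const 2 μ 1) _ _ ?_ hfφ.coeFn_toLp]
    · exact hfφ.coeFn_toLp
    filter_upwards [hf.coeFn_toLp, Lp.coeFn_const 2 μ (1 : ℂ)] with x hfx h1x
    rw [hfx, h1x, Function.const_apply, mul_one]
  have hφS := eLpNorm_top_le_nnnorm_of_apply_hasCompactSupport ENNReal.ofNat_ne_top S
    (Lp.memLp φ) hS
  have hφ : MemLp φ ∞ μ := ⟨Lp.aestronglyMeasurable φ, hφS.trans_lt ENNReal.coe_lt_top⟩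
  have hSφ := Lp.eq_mulOp_of_apply_hasCompactSupport ENNReal.ofNat_ne_top S hφ hS
  refine ⟨φ, (Lp.stronglyMeasurable φ).measurable, hφ.eLpNorm_ne_top, fun g => ?_,
    le_antisymm ?_ ?_⟩
  · rw [hSφ]
    filter_upwards [Lp.coeFn_mulOp (hφ.toLp φ) g, hφ.coeFn_toLp] with x hφgx hφx
    rw [hφgx, hφx]
  · rw [hSφ, ← Lp.norm_toLp φ hφ]
    exact Lp.norm_mulOp_le _
  · simpa using ENNReal.toReal_mono ENNReal.coe_ne_top hφS
end

section
/- Let n ≥ 1 and A ∈ M_n(ℂ). Then the operator norm of the Schur multiplication map S_A equals its completely bounded norm: ‖S_A‖ = sup_{k≥1} ‖S_{J_k ⊗ A}‖, the supremum over k of the operator norm of Schur multiplication by J_k ⊗ A on M_{kn}(ℂ). -/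
/-!
Write a vector `u` indexed by `κ × ι` as `u = U ξ`, where `ξ p` is the norm of the block
`u (·, p)` and `U` is the contraction whose `p`-th column is that block, normalised and placed in
block `p`. For two such block-column matrices `U`, `V` the Schur product with `J ⊗ A` commutes
with compression: `Uᴴ ((J ⊗ A) ⊙ B) V = A ⊙ (Uᴴ B V)`. Hence
`⟪u, ((J ⊗ A) ⊙ B) v⟫ = ⟪ξ, (A ⊙ C) η⟫` with the contraction `C = Uᴴ B V`, which bounds every
amplification of `S_A` by `‖S_A‖`; the reverse inequality is the amplification with `k = 1`.
-/

open scoped Kronecker Matrix Matrix.Norms.L2Operator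
open WithLp

namespace Matrix

variable {𝕜 : Type*} [RCLike 𝕜]

section L2OpNorm

variable {k l m n : Type*} [Fintype k] [Fintype l] [Fintype m] [Fintype n]

lemma star_mulVec_dotProduct_mulVec_mulVec (U : Matrix m n 𝕜) (T : Matrix m l 𝕜)
    (V : Matrix l k 𝕜) (ξ : n → 𝕜) (η : k → 𝕜) :
    star (U *ᵥ ξ) ⬝ᵥ T *ᵥ (V *ᵥ η) = star ξ ⬝ᵥ (Uᴴ * T * V) *ᵥ η := by
  simp [star_mulVec, dotProduct_mulVec, vecMul_vecMul, mulVec_mulVec, Matrix.mul_assoc]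

variable [DecidableEq n]

lemma norm_star_dotProduct_mulVec_le (M : Matrix m n 𝕜) (u : EuclideanSpace 𝕜 m)
    (v : EuclideanSpace 𝕜 n) : ‖star (ofLp u) ⬝ᵥ M *ᵥ ofLp v‖ ≤ ‖M‖ * ‖u‖ * ‖v‖ := by
  rw [dotProduct_comm, ← EuclideanSpace.inner_toLp_toLp, toLp_ofLp, mul_comm ‖M‖, mul_assoc]
  exact (norm_inner_le_norm _ _).trans (by gcongr; exact l2_opNorm_mulVec M v)

lemma l2_opNorm_le_of_forall_norm_star_dotProduct_mulVec_le {M : Matrix m n 𝕜} {c : ℝ}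
    (hc : 0 ≤ c) (h : ∀ (u : EuclideanSpace 𝕜 m) (v : EuclideanSpace 𝕜 n),
      ‖star (ofLp u) ⬝ᵥ M *ᵥ ofLp v‖ ≤ c * ‖u‖ * ‖v‖) :
    ‖M‖ ≤ c := by
  rw [l2_opNorm_def]
  refine ContinuousLinearMap.opNorm_le_bound _ hc fun v => ?_
  set w : EuclideanSpace 𝕜 m := toLp 2 (M *ᵥ ofLp v)
  change ‖w‖ ≤ c * ‖v‖
  have hw : ‖w‖ * ‖w‖ ≤ c * ‖w‖ * ‖v‖ :=
    calc ‖w‖ * ‖w‖ = ‖star (ofLp w) ⬝ᵥ M *ᵥ ofLp v‖ := by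
          rw [dotProduct_comm, ← EuclideanSpace.inner_toLp_toLp, toLp_ofLp,
            ← inner_self_re_eq_norm, inner_self_eq_norm_mul_norm]
      _ ≤ c * ‖w‖ * ‖v‖ := h w v
  rcases (norm_nonneg w).eq_or_lt with hw0 | hw0
  · rw [← hw0]; positivity
  · exact le_of_mul_le_mul_left (by linarith) hw0

lemma norm_conjTranspose_mul_mul_le [DecidableEq k] [DecidableEq l] [DecidableEq m]
    {U : Matrix m n 𝕜} {V : Matrix l k 𝕜} (hU : ‖U‖ ≤ 1) (hV : ‖V‖ ≤ 1) (T : Matrix m l 𝕜) :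
    ‖Uᴴ * T * V‖ ≤ ‖T‖ :=
  calc ‖Uᴴ * T * V‖ ≤ ‖Uᴴ‖ * ‖T‖ * ‖V‖ :=
        (l2_opNorm_mul _ _).trans (by gcongr; exact l2_opNorm_mul _ _)
    _ ≤ 1 * ‖T‖ * 1 := by rw [l2_opNorm_conjTranspose]; gcongr
    _ = ‖T‖ := by ring

lemma exists_norm_hadamard_le (A : Matrix m n 𝕜) :
    ∃ c, ∀ B : Matrix m n 𝕜, ‖B‖ ≤ 1 → ‖A ⊙ B‖ ≤ c := by
  let S : Matrix m n 𝕜 →ₗ[𝕜] Matrix m n 𝕜 :=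
    { toFun := (A ⊙ ·)
      map_add' := fun B C => hadamard_add A B C
      map_smul' := fun c B => hadamard_smul A B c }
  refine ⟨‖LinearMap.toContinuousLinearMap S‖, fun B hB => ?_⟩
  exact ((LinearMap.toContinuousLinearMap S).le_opNorm B).trans
    (mul_le_of_le_one_right (norm_nonneg _) hB)

end L2OpNorm

section BlockColumn

variable {κ ι : Type*} [Fintype κ] [Fintype ι] [DecidableEq ι]

def blockColumn (x : ι → EuclideanSpace 𝕜 κ) : Matrix (κ × ι) ι 𝕜 :=
  of fun a p => if a.2 = p then x p a.1 else 0

lemma conjTranspose_blockColumn_mul_self (x : ι → EuclideanSpace 𝕜 κ) :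
    (blockColumn x)ᴴ * blockColumn x = diagonal fun p => ((‖x p‖ ^ 2 : ℝ) : 𝕜) := by
  ext p q
  simp only [mul_apply, conjTranspose_apply, blockColumn, of_apply, Fintype.sum_prod_type]
  rw [Finset.sum_comm]
  by_cases h : p = q
  · subst h
    simp [diagonal_apply_eq, ← inner_self_eq_norm_sq_to_K, PiLp.inner_apply, mul_comm]
  · simp [h, Ne.symm h]

lemma norm_blockColumn_le_one {x : ι → EuclideanSpace 𝕜 κ} (hx : ∀ p, ‖x p‖ ≤ 1) :
    ‖blockColumn x‖ ≤ 1 := by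
  have h : ‖blockColumn x‖ * ‖blockColumn x‖ ≤ 1 := by
    rw [← l2_opNorm_conjTranspose_mul_self, conjTranspose_blockColumn_mul_self,
      l2_opNorm_diagonal]
    refine (pi_norm_le_iff_of_nonneg zero_le_one).mpr fun p => ?_
    rw [RCLike.norm_ofReal, abs_of_nonneg (by positivity)]
    exact pow_le_one₀ (norm_nonneg _) (hx p)
  nlinarith [norm_nonneg (blockColumn x)]

lemma conjTranspose_blockColumn_mul_kronecker_hadamard_mul (x y : ι → EuclideanSpace 𝕜 κ)
    (A : Matrix ι ι 𝕜) (B : Matrix (κ × ι) (κ × ι) 𝕜) :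
    (blockColumn x)ᴴ * (((of fun _ _ => 1 : Matrix κ κ 𝕜) ⊗ₖ A) ⊙ B) * blockColumn y =
      A ⊙ ((blockColumn x)ᴴ * B * blockColumn y) := by
  ext p q
  simp [mul_apply, blockColumn, Fintype.sum_prod_type, Finset.mul_sum, Finset.sum_mul,
    apply_ite (starRingEnd 𝕜), ite_mul, mul_left_comm, mul_assoc]

lemma exists_blockColumn_mulVec_eq (u : EuclideanSpace 𝕜 (κ × ι)) :
    ∃ (x : ι → EuclideanSpace 𝕜 κ) (ξ : EuclideanSpace 𝕜 ι),
      (∀ p, ‖x p‖ ≤ 1) ∧ ‖ξ‖ = ‖u‖ ∧ blockColumn x *ᵥ ofLp ξ = ofLp u := by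
  set col : ι → EuclideanSpace 𝕜 κ := fun p => toLp 2 fun i => u (i, p)
  -- a zero block gets the zero direction, since `‖0‖⁻¹ = 0`
  refine ⟨fun p => ((‖col p‖⁻¹ : ℝ) : 𝕜) • col p, toLp 2 fun p => (‖col p‖ : 𝕜),
    fun p => ?_, ?_, ?_⟩
  · rw [norm_smul, RCLike.norm_ofReal, abs_of_nonneg (by positivity)]
    exact inv_mul_le_one_of_le₀ le_rfl (norm_nonneg _)
  · rw [← sq_eq_sq₀ (norm_nonneg _) (norm_nonneg _), EuclideanSpace.norm_sq_eq,
      EuclideanSpace.norm_sq_eq, Fintype.sum_prod_type_right]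
    simp [col, EuclideanSpace.norm_sq_eq]
  · ext ⟨i, p⟩
    by_cases h : col p = 0
    · have hu : u (i, p) = 0 := congrArg (· i) h
      simp [mulVec, dotProduct, blockColumn, h, hu]
    · have h' : (‖col p‖ : 𝕜) ≠ 0 := by simpa using h
      simp only [mulVec, dotProduct, blockColumn, of_apply, ite_mul, zero_mul,
        Finset.sum_ite_eq, Finset.mem_univ, if_true, PiLp.smul_apply, smul_eq_mul,
        RCLike.ofReal_inv]
      rw [mul_right_comm, inv_mul_cancel₀ h', one_mul]

theorem norm_kronecker_hadamard_le [DecidableEq κ] {A : Matrix ι ι 𝕜}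
    {B : Matrix (κ × ι) (κ × ι) 𝕜} {c : ℝ} (hA : ∀ C : Matrix ι ι 𝕜, ‖C‖ ≤ 1 → ‖A ⊙ C‖ ≤ c)
    (hB : ‖B‖ ≤ 1) : ‖((of fun _ _ => 1 : Matrix κ κ 𝕜) ⊗ₖ A) ⊙ B‖ ≤ c := by
  have hc : 0 ≤ c := (norm_nonneg _).trans (hA 0 (by simp))
  refine l2_opNorm_le_of_forall_norm_star_dotProduct_mulVec_le hc fun u v => ?_
  obtain ⟨x, ξ, hx, hξ, hu⟩ := exists_blockColumn_mulVec_eq u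
  obtain ⟨y, η, hy, hη, hv⟩ := exists_blockColumn_mulVec_eq v
  set C := (blockColumn x)ᴴ * B * blockColumn y
  have hC : ‖C‖ ≤ 1 :=
    (norm_conjTranspose_mul_mul_le (norm_blockColumn_le_one hx) (norm_blockColumn_le_one hy)
      B).trans hB
  calc ‖star (ofLp u) ⬝ᵥ (((of fun _ _ => 1 : Matrix κ κ 𝕜) ⊗ₖ A) ⊙ B) *ᵥ ofLp v‖
      = ‖star (ofLp ξ) ⬝ᵥ (A ⊙ C) *ᵥ ofLp η‖ := by
        rw [← hu, ← hv, star_mulVec_dotProduct_mulVec_mulVec,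
          conjTranspose_blockColumn_mul_kronecker_hadamard_mul]
    _ ≤ ‖A ⊙ C‖ * ‖ξ‖ * ‖η‖ := norm_star_dotProduct_mulVec_le _ _ _
    _ ≤ c * ‖u‖ * ‖v‖ := by rw [hξ, hη]; gcongr; exact hA C hC

lemma exists_norm_hadamard_le_norm_kronecker_hadamard [DecidableEq κ] (i₀ : κ)
    (A B : Matrix ι ι 𝕜) : ∃ B' : Matrix (κ × ι) (κ × ι) 𝕜,
      ‖B'‖ ≤ ‖B‖ ∧ ‖A ⊙ B‖ ≤ ‖((of fun _ _ => 1 : Matrix κ κ 𝕜) ⊗ₖ A) ⊙ B'‖ := by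
  set U := blockColumn fun _ : ι => EuclideanSpace.single i₀ (1 : 𝕜)
  have hUU : Uᴴ * U = 1 := by simp [U, conjTranspose_blockColumn_mul_self]
  have hU : ‖U‖ ≤ 1 := norm_blockColumn_le_one fun _ => by simp
  have hUH : ‖Uᴴ‖ ≤ 1 := by rwa [l2_opNorm_conjTranspose]
  refine ⟨U * B * Uᴴ, by simpa using norm_conjTranspose_mul_mul_le hUH hUH B, ?_⟩
  calc ‖A ⊙ B‖ = ‖Uᴴ * (((of fun _ _ => 1 : Matrix κ κ 𝕜) ⊗ₖ A) ⊙ (U * B * Uᴴ)) * U‖ := by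
        rw [conjTranspose_blockColumn_mul_kronecker_hadamard_mul, ← Matrix.mul_assoc,
          ← Matrix.mul_assoc, hUU, Matrix.mul_assoc, hUU, Matrix.one_mul, Matrix.mul_one]
    _ ≤ _ := norm_conjTranspose_mul_mul_le hU hU _

end BlockColumn

end Matrix

theorem schur_multiplier_norm_eq_cb_norm_general (n : ℕ)
    (A : Matrix (Fin n) (Fin n) ℂ) :
    sSup {r : ℝ | ∃ B : Matrix (Fin n) (Fin n) ℂ,
        ‖Matrix.toEuclideanCLM (𝕜 := ℂ) B‖ ≤ 1 ∧
        r = ‖Matrix.toEuclideanCLM (𝕜 := ℂ) (A.hadamard B)‖} =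
    sSup {r : ℝ | ∃ k : ℕ, 1 ≤ k ∧ ∃ B : Matrix (Fin k × Fin n) (Fin k × Fin n) ℂ,
        ‖Matrix.toEuclideanCLM (𝕜 := ℂ) B‖ ≤ 1 ∧
        r = ‖Matrix.toEuclideanCLM (𝕜 := ℂ)
              (((Matrix.of fun _ _ => (1 : ℂ) : Matrix (Fin k) (Fin k) ℂ) ⊗ₖ A).hadamard B)‖} := by
  simp only [Matrix.l2_opNorm_toEuclideanCLM]
  set S₁ := {r : ℝ | ∃ B : Matrix (Fin n) (Fin n) ℂ, ‖B‖ ≤ 1 ∧ r = ‖A ⊙ B‖}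
  set S₂ := {r : ℝ | ∃ k : ℕ, 1 ≤ k ∧ ∃ B : Matrix (Fin k × Fin n) (Fin k × Fin n) ℂ,
    ‖B‖ ≤ 1 ∧ r = ‖((Matrix.of fun _ _ => (1 : ℂ) : Matrix (Fin k) (Fin k) ℂ) ⊗ₖ A) ⊙ B‖}
  obtain ⟨c, hc⟩ := Matrix.exists_norm_hadamard_le A
  have hS₁ : ∀ C : Matrix (Fin n) (Fin n) ℂ, ‖C‖ ≤ 1 → ‖A ⊙ C‖ ≤ sSup S₁ := fun C hC =>
    le_csSup ⟨c, by rintro _ ⟨B, hB, rfl⟩; exact hc B hB⟩ ⟨C, hC, rfl⟩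
  have hS₂ : ∀ r ∈ S₂, r ≤ sSup S₁ := by
    rintro _ ⟨k, -, B, hB, rfl⟩
    exact Matrix.norm_kronecker_hadamard_le hS₁ hB
  refine le_antisymm (csSup_le ⟨0, 0, by simp, by simp⟩ ?_)
    (csSup_le ⟨0, 1, le_rfl, 0, by simp, by simp⟩ hS₂)
  rintro _ ⟨B, hB, rfl⟩
  obtain ⟨B', hB', hAB⟩ := Matrix.exists_norm_hadamard_le_norm_kronecker_hadamard (0 : Fin 1) A B
  exact hAB.trans (le_csSup ⟨_, hS₂⟩ ⟨1, le_rfl, B', hB'.trans hB, rfl⟩)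

/-- **The Schur multiplier norm equals its completely bounded norm.**  For `A ∈ M_n(ℂ)`, the
operator norm of Schur multiplication `S_A` on `M_n(ℂ)` (with the operator norm on matrices)
equals `sup_{k ≥ 1} ‖S_{J_k ⊗ A}‖`, the supremum over all matrix amplifications. -/
theorem schur_multiplier_norm_eq_cb_norm (n : ℕ) (hn : 1 ≤ n)
    (A : Matrix (Fin n) (Fin n) ℂ) :
    sSup {r : ℝ | ∃ B : Matrix (Fin n) (Fin n) ℂ,
        ‖Matrix.toEuclideanCLM (𝕜 := ℂ) B‖ ≤ 1 ∧
        r = ‖Matrix.toEuclideanCLM (𝕜 := ℂ) (A.hadamard B)‖} =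
    sSup {r : ℝ | ∃ k : ℕ, 1 ≤ k ∧ ∃ B : Matrix (Fin k × Fin n) (Fin k × Fin n) ℂ,
        ‖Matrix.toEuclideanCLM (𝕜 := ℂ) B‖ ≤ 1 ∧
        r = ‖Matrix.toEuclideanCLM (𝕜 := ℂ)
              (((Matrix.of fun _ _ => (1 : ℂ) : Matrix (Fin k) (Fin k) ℂ) ⊗ₖ A).hadamard B)‖} :=
  schur_multiplier_norm_eq_cb_norm_general n A
end
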